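/- arXiv:2105.10711 — 7 statements merged into one kernel-verified Lean document; each statement's English description precedes it below -/
import Mathlib

section
/- Let λ, λ₁, λ₂ be real numbers with 0 < λ < 1 < λ₁ < λ₂ and set α = λ + λ₁ − λ₂ − λλ₁ + λλ₂ + λ₁λ₂. Then α² − 4λλ₁λ₂ > 0. (In fact, α² − 4λλ₁λ₂ = (α − 2)² + 4(1 − λ)(λ₁ − 1)(1 + λ₂).) -/
theorem sq_sub_four_mul_eq_sq_sub_two_add (l l1 l2 : ℝ) :
    (l + l1 - l2 - l * l1 + l * l2 + l1 * l2) ^ 2 - 4 * l * l1 * l2 =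
      (l + l1 - l2 - l * l1 + l * l2 + l1 * l2 - 2) ^ 2 + 4 * (1 - l) * (l1 - 1) * (1 + l2) := by
  ring

theorem stmt_0_general (l l1 l2 : ℝ) (h1 : l < 1) (h2 : 1 < l1) (h3 : l1 < l2) :
    (l + l1 - l2 - l * l1 + l * l2 + l1 * l2) ^ 2 - 4 * l * l1 * l2 > 0 ∧
    (l + l1 - l2 - l * l1 + l * l2 + l1 * l2) ^ 2 - 4 * l * l1 * l2 =
      (l + l1 - l2 - l * l1 + l * l2 + l1 * l2 - 2) ^ 2 + 4 * (1 - l) * (l1 - 1) * (1 + l2) := by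
  have hid := sq_sub_four_mul_eq_sq_sub_two_add l l1 l2
  have hl : 0 < 1 - l := sub_pos.mpr h1
  have hl1 : 0 < l1 - 1 := sub_pos.mpr h2
  have hl2 : 0 < 1 + l2 := by linarith
  refine ⟨?_, hid⟩
  rw [hid]
  exact add_pos_of_nonneg_of_pos (sq_nonneg _) (by positivity)

theorem stmt_0 (l l1 l2 : ℝ) (h0 : 0 < l) (h1 : l < 1) (h2 : 1 < l1) (h3 : l1 < l2) :
    (l + l1 - l2 - l * l1 + l * l2 + l1 * l2) ^ 2 - 4 * l * l1 * l2 > 0 ∧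
    (l + l1 - l2 - l * l1 + l * l2 + l1 * l2) ^ 2 - 4 * l * l1 * l2 =
      (l + l1 - l2 - l * l1 + l * l2 + l1 * l2 - 2) ^ 2 + 4 * (1 - l) * (l1 - 1) * (1 + l2) :=
  stmt_0_general l l1 l2 h1 h2 h3
end

section
/- Let λ, λ₁, λ₂ be real numbers with 0 < λ < 1 < λ₁ < λ₂. Define α = λ + λ₁ − λ₂ − λλ₁ + λλ₂ + λ₁λ₂, a = √((α − √(α² − 4λλ₁λ₂))/2), and b = √((α + √(α² − 4λλ₁λ₂))/2). Then a and b are real and satisfy 0 < λ < √λ < a < 1 < λ₁ < b < λ₂. -/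
/-!
a² and b² are the two roots of the monic quadratic p(x) = x² − αx + λλ₁λ₂, and a direct computation
factors its values at the four points λ < 1 < λ₁² < λ₂²:
p(λ) = λ(λ₂ − λ₁)(1 − λ), p(1) = −(1 − λ)(λ₁ − 1)(1 + λ₂),
p(λ₁²) = −λ₁(λ₂ − λ₁)(λ₁ + λ)(λ₁ − 1), p(λ₂²) = λ₂(λ₂ − λ₁)(λ₂ + 1)(λ₂ − λ).
The signs + − − + place one root in (λ, 1) and the other in (λ₁², λ₂²); taking square roots finishes.
-/

open Real

namespace Quadratic

-- The roots of `x ^ 2 - α * x + c`, provided `4 * c ≤ α ^ 2`.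
noncomputable def lowerRoot (α c : ℝ) : ℝ := (α - √(α ^ 2 - 4 * c)) / 2

noncomputable def upperRoot (α c : ℝ) : ℝ := (α + √(α ^ 2 - 4 * c)) / 2

variable {α c x y : ℝ}

theorem discrim_pos_of_neg (h : y ^ 2 - α * y + c < 0) : 0 < α ^ 2 - 4 * c := by
  nlinarith [sq_nonneg (2 * y - α)]

theorem eq_mul_sub_roots (h : 0 ≤ α ^ 2 - 4 * c) (x : ℝ) :
    x ^ 2 - α * x + c = (x - lowerRoot α c) * (x - upperRoot α c) := by
  have hs := sq_sqrt h
  unfold lowerRoot upperRoot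
  linear_combination hs / 4

theorem lowerRoot_le_upperRoot : lowerRoot α c ≤ upperRoot α c := by
  unfold lowerRoot upperRoot
  linarith [sqrt_nonneg (α ^ 2 - 4 * c)]

theorem lowerRoot_lt_of_neg (h : y ^ 2 - α * y + c < 0) : lowerRoot α c < y := by
  rw [eq_mul_sub_roots (discrim_pos_of_neg h).le] at h
  nlinarith [lowerRoot_le_upperRoot (α := α) (c := c)]

theorem lt_upperRoot_of_neg (h : y ^ 2 - α * y + c < 0) : y < upperRoot α c := by
  rw [eq_mul_sub_roots (discrim_pos_of_neg h).le] at h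
  nlinarith [lowerRoot_le_upperRoot (α := α) (c := c)]

theorem lt_lowerRoot (hy : y ^ 2 - α * y + c < 0) (hx : 0 < x ^ 2 - α * x + c) (hxy : x < y) :
    x < lowerRoot α c := by
  have hxu : x < upperRoot α c := hxy.trans (lt_upperRoot_of_neg hy)
  rw [eq_mul_sub_roots (discrim_pos_of_neg hy).le] at hx
  nlinarith

theorem upperRoot_lt (hy : y ^ 2 - α * y + c < 0) (hx : 0 < x ^ 2 - α * x + c) (hyx : y < x) :
    upperRoot α c < x := by
  have hlx : lowerRoot α c < x := (lowerRoot_lt_of_neg hy).trans hyx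
  rw [eq_mul_sub_roots (discrim_pos_of_neg hy).le] at hx
  nlinarith

end Quadratic

open Quadratic

theorem stmt_1 (l l1 l2 : ℝ) (h0 : 0 < l) (h1 : l < 1) (h2 : 1 < l1) (h3 : l1 < l2) :
    let α : ℝ := l + l1 - l2 - l * l1 + l * l2 + l1 * l2
    let a : ℝ := Real.sqrt ((α - Real.sqrt (α ^ 2 - 4 * l * l1 * l2)) / 2)
    let b : ℝ := Real.sqrt ((α + Real.sqrt (α ^ 2 - 4 * l * l1 * l2)) / 2)
    0 < l ∧ l < Real.sqrt l ∧ Real.sqrt l < a ∧ a < 1 ∧ 1 < l1 ∧ l1 < b ∧ b < l2 := by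
  intro α a b
  have ha : a = √(lowerRoot α (l * l1 * l2)) := by simp only [a, lowerRoot]; ring_nf
  have hb : b = √(upperRoot α (l * l1 * l2)) := by simp only [b, upperRoot]; ring_nf
  have hl1 : 0 < l1 := by linarith
  have hl2 : 0 < l2 := by linarith
  have p_l : 0 < l ^ 2 - α * l + l * l1 * l2 := by
    linarith [mul_pos (mul_pos h0 (sub_pos.2 h3)) (sub_pos.2 h1)]
  have p_one : (1 : ℝ) ^ 2 - α * 1 + l * l1 * l2 < 0 := by
    linarith [mul_pos (mul_pos (sub_pos.2 h1) (sub_pos.2 h2)) (by linarith : (0 : ℝ) < 1 + l2)]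
  have p_l1 : (l1 ^ 2) ^ 2 - α * l1 ^ 2 + l * l1 * l2 < 0 := by
    linarith [mul_pos (mul_pos (mul_pos hl1 (sub_pos.2 h3)) (by linarith : (0 : ℝ) < l1 + l))
      (sub_pos.2 h2)]
  have p_l2 : 0 < (l2 ^ 2) ^ 2 - α * l2 ^ 2 + l * l1 * l2 := by
    linarith [mul_pos (mul_pos (mul_pos hl2 (sub_pos.2 h3)) (by linarith : (0 : ℝ) < l2 + 1))
      (by linarith : (0 : ℝ) < l2 - l)]
  rw [ha, hb]
  refine ⟨h0, lt_sqrt_self_iff.2 ⟨h0.ne', h1⟩, sqrt_lt_sqrt h0.le (lt_lowerRoot p_one p_l h1),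
    (sqrt_lt' one_pos).2 (by simpa using lowerRoot_lt_of_neg p_one), h2,
    (lt_sqrt hl1.le).2 (lt_upperRoot_of_neg p_l1),
    (sqrt_lt' hl2).2 (upperRoot_lt p_l1 p_l2 (by gcongr))⟩
end

section
/- Let λ and λ₂ be real numbers with 0 < λ < 1 < λ₂ and λλ₂ > 1. Then the improper integral ∫_0^1 [(λλ₂ − 1)/(2√((1 − λ²)(λ₂² − 1)))] · [(2(λ₂ − λ)s − (1 − λ)(1 + λ₂))/(2(λλ₂ − 1)s + (1 − λ)(1 + λ₂))] · 1/√(s(1 − s)) ds equals (π/2)·((λ₂ − λ)/√((1 − λ²)(λ₂² − 1)) − 1). -/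
/-!
Writing `(a s - b) / (c s + b) = a / c - (b (a + c) / c) / (c s + b)` reduces the integral to
`∫₀¹ ds / ((c s + b) √(s (1 - s)))` and its case `c = 0`. For `b > 0`, `b + c > 0` this
equals `π / √(b (b + c))`: the function `arccos ((b - (2b + c) s) / (c s + b))` is continuous
on `[0, 1]`, runs from `0` to `π`, and has derivative `√(b (b + c)) / ((c s + b) √(s (1 - s)))`
inside. The theorem is the case `b = (1 - λ)(1 + λ₂)`, `c = 2(λλ₂ - 1)`, where
`b (b + c) = (1 - λ²)(λ₂² - 1)`.
-/

open MeasureTheory Real Set intervalIntegral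

section

variable {b c : ℝ}

lemma affine_pos_of_mem_Icc (hb : 0 < b) (hbc : 0 < b + c) {s : ℝ}
    (hs : s ∈ Icc (0 : ℝ) 1) : 0 < c * s + b := by
  rcases le_total 0 c with hc | hc <;> nlinarith [hs.1, hs.2]

lemma one_sub_sq_moebius {s : ℝ} (hs : c * s + b ≠ 0) :
    1 - ((b - (2 * b + c) * s) / (c * s + b)) ^ 2
      = 4 * (b * (b + c)) * (s * (1 - s)) / (c * s + b) ^ 2 := by
  field_simp
  ring

lemma hasDerivAt_arccos_moebius (hb : 0 < b) (hbc : 0 < b + c) {s : ℝ}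
    (hs : s ∈ Ioo (0 : ℝ) 1) :
    HasDerivAt (fun s => arccos ((b - (2 * b + c) * s) / (c * s + b)))
      (√(b * (b + c)) / ((c * s + b) * √(s * (1 - s)))) s := by
  obtain ⟨hs0, hs1⟩ := hs
  have hpos : 0 < c * s + b := affine_pos_of_mem_Icc hb hbc ⟨hs0.le, hs1.le⟩
  have hu : HasDerivAt (fun s => (b - (2 * b + c) * s) / (c * s + b))
      (-(2 * (b * (b + c))) / (c * s + b) ^ 2) s := by
    have hn : HasDerivAt (fun s => b - (2 * b + c) * s) (-(2 * b + c)) s := by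
      simpa using ((hasDerivAt_id s).const_mul (2 * b + c)).const_sub b
    have hd : HasDerivAt (fun s => c * s + b) c s := by
      simpa using ((hasDerivAt_id s).const_mul c).add_const b
    exact (hn.div hd hpos.ne').congr_deriv (by ring)
  have hroot_pos : 0 < 2 * √(b * (b + c)) * √(s * (1 - s)) / (c * s + b) := by
    have : 0 < s * (1 - s) := by nlinarith
    positivity
  have hroot : √(1 - ((b - (2 * b + c) * s) / (c * s + b)) ^ 2)
      = 2 * √(b * (b + c)) * √(s * (1 - s)) / (c * s + b) := by
    rw [one_sub_sq_moebius hpos.ne', ← sqrt_sq hroot_pos.le]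
    congr 1
    rw [div_pow, mul_pow, mul_pow, sq_sqrt (by positivity), sq_sqrt (by nlinarith)]
    ring
  have hu1 : (b - (2 * b + c) * s) / (c * s + b) ≠ 1 := by
    intro h; rw [h] at hroot; norm_num at hroot; linarith
  have hu2 : (b - (2 * b + c) * s) / (c * s + b) ≠ -1 := by
    intro h; rw [h] at hroot; norm_num at hroot; linarith
  refine ((hasDerivAt_arccos hu2 hu1).comp s hu).congr_deriv ?_
  rw [hroot]
  field_simp
  rw [sq_sqrt (mul_pos hb hbc).le]

lemma continuousOn_arccos_moebius (hb : 0 < b) (hbc : 0 < b + c) :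
    ContinuousOn (fun s => arccos ((b - (2 * b + c) * s) / (c * s + b))) (Icc 0 1) :=
  continuous_arccos.comp_continuousOn <| ContinuousOn.div (by fun_prop) (by fun_prop)
    fun s hs => (affine_pos_of_mem_Icc hb hbc hs).ne'

lemma intervalIntegrable_sqrt_div_affine_mul_sqrt (hb : 0 < b) (hbc : 0 < b + c) :
    IntervalIntegrable (fun s => √(b * (b + c)) / ((c * s + b) * √(s * (1 - s))))
      volume 0 1 := by
  refine intervalIntegrable_deriv_of_nonneg
    (g := fun s => arccos ((b - (2 * b + c) * s) / (c * s + b))) ?_ ?_ ?_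
  · simpa using continuousOn_arccos_moebius hb hbc
  · simpa using fun s hs => hasDerivAt_arccos_moebius hb hbc hs
  · intro s hs
    simp only [zero_le_one, min_eq_left, max_eq_right] at hs
    have := affine_pos_of_mem_Icc hb hbc (Ioo_subset_Icc_self hs)
    positivity

lemma integral_sqrt_div_affine_mul_sqrt (hb : 0 < b) (hbc : 0 < b + c) :
    ∫ s in (0 : ℝ)..1, √(b * (b + c)) / ((c * s + b) * √(s * (1 - s))) = π := by
  rw [integral_eq_sub_of_hasDerivAt_of_le zero_le_one (continuousOn_arccos_moebius hb hbc)
    (fun s hs => hasDerivAt_arccos_moebius hb hbc hs)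
    (intervalIntegrable_sqrt_div_affine_mul_sqrt hb hbc)]
  have : (b - (2 * b + c)) / (c + b) = -1 := by
    rw [div_eq_iff (by linarith)]; ring
  simp [this, hb.ne']

lemma intervalIntegrable_one_div_affine_mul_sqrt (hb : 0 < b) (hbc : 0 < b + c) :
    IntervalIntegrable (fun s => 1 / ((c * s + b) * √(s * (1 - s)))) volume 0 1 := by
  have hK : √(b * (b + c)) ≠ 0 := (sqrt_pos.2 (mul_pos hb hbc)).ne'
  convert (intervalIntegrable_sqrt_div_affine_mul_sqrt hb hbc).div_const √(b * (b + c)) using 2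
  field_simp

lemma integral_one_div_affine_mul_sqrt (hb : 0 < b) (hbc : 0 < b + c) :
    ∫ s in (0 : ℝ)..1, 1 / ((c * s + b) * √(s * (1 - s))) = π / √(b * (b + c)) := by
  have hK : √(b * (b + c)) ≠ 0 := (sqrt_pos.2 (mul_pos hb hbc)).ne'
  rw [← integral_sqrt_div_affine_mul_sqrt hb hbc, ← intervalIntegral.integral_div]
  congr 1 with s
  field_simp

end

lemma intervalIntegrable_one_div_sqrt_mul_one_sub :
    IntervalIntegrable (fun s : ℝ => 1 / √(s * (1 - s))) volume 0 1 := by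
  simpa using intervalIntegrable_one_div_affine_mul_sqrt (b := 1) (c := 0) one_pos (by norm_num)

lemma integral_one_div_sqrt_mul_one_sub : ∫ s in (0 : ℝ)..1, 1 / √(s * (1 - s)) = π := by
  simpa using integral_one_div_affine_mul_sqrt (b := 1) (c := 0) one_pos (by norm_num)

lemma integral_affine_div_affine_mul_one_div_sqrt {a b c : ℝ} (hb : 0 < b) (hbc : 0 < b + c)
    (hc : c ≠ 0) :
    ∫ s in (0 : ℝ)..1, (a * s - b) / (c * s + b) * (1 / √(s * (1 - s)))
      = π * (a / c) - b * (a + c) / c * (π / √(b * (b + c))) := by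
  have hsplit : EqOn (fun s => (a * s - b) / (c * s + b) * (1 / √(s * (1 - s))))
      (fun s => a / c * (1 / √(s * (1 - s)))
        - b * (a + c) / c * (1 / ((c * s + b) * √(s * (1 - s))))) (uIcc 0 1) := by
    intro s hs
    rw [uIcc_of_le zero_le_one] at hs
    have hpos := (affine_pos_of_mem_Icc hb hbc hs).ne'
    have : (a * s - b) / (c * s + b) = a / c - b * (a + c) / c / (c * s + b) := by
      rw [div_div, eq_sub_iff_add_eq, div_add_div _ _ hpos (mul_ne_zero hc hpos),
        div_eq_div_iff (mul_ne_zero hpos (mul_ne_zero hc hpos)) hc]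
      ring
    simp only [this, ← one_div_mul_one_div]
    ring
  rw [integral_congr hsplit, intervalIntegral.integral_sub, intervalIntegral.integral_const_mul,
    intervalIntegral.integral_const_mul,
    integral_one_div_sqrt_mul_one_sub, integral_one_div_affine_mul_sqrt hb hbc]
  · ring
  · exact intervalIntegrable_one_div_sqrt_mul_one_sub.const_mul _
  · exact (intervalIntegrable_one_div_affine_mul_sqrt hb hbc).const_mul _

theorem stmt_5_general (l l2 : ℝ) (h1 : l < 1) (h2 : 1 < l2) (h3 : 1 < l * l2) :
    (∫ s in (0 : ℝ)..1,
        (l * l2 - 1) / (2 * Real.sqrt ((1 - l ^ 2) * (l2 ^ 2 - 1))) *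
          ((2 * (l2 - l) * s - (1 - l) * (1 + l2)) /
            (2 * (l * l2 - 1) * s + (1 - l) * (1 + l2))) *
          (1 / Real.sqrt (s * (1 - s)))) =
      Real.pi / 2 * ((l2 - l) / Real.sqrt ((1 - l ^ 2) * (l2 ^ 2 - 1)) - 1) := by
  set K := (l * l2 - 1) / (2 * √((1 - l ^ 2) * (l2 ^ 2 - 1))) with hK
  have hb : 0 < (1 - l) * (1 + l2) := by nlinarith
  have hbc : 0 < (1 - l) * (1 + l2) + 2 * (l * l2 - 1) := by nlinarith
  have hD : (1 - l) * (1 + l2) * ((1 - l) * (1 + l2) + 2 * (l * l2 - 1))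
      = (1 - l ^ 2) * (l2 ^ 2 - 1) := by ring
  have hc : l * l2 - 1 ≠ 0 := by linarith
  have hDpos : 0 < (1 - l ^ 2) * (l2 ^ 2 - 1) := hD ▸ mul_pos hb hbc
  simp_rw [mul_assoc K]
  rw [intervalIntegral.integral_const_mul,
    integral_affine_div_affine_mul_one_div_sqrt hb hbc (mul_ne_zero two_ne_zero hc), hD, hK]
  field_simp
  linear_combination mul_self_sqrt hDpos.le

theorem stmt_5 (l l2 : ℝ) (h0 : 0 < l) (h1 : l < 1) (h2 : 1 < l2) (h3 : 1 < l * l2) :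
    (∫ s in (0 : ℝ)..1,
        (l * l2 - 1) / (2 * Real.sqrt ((1 - l ^ 2) * (l2 ^ 2 - 1))) *
          ((2 * (l2 - l) * s - (1 - l) * (1 + l2)) /
            (2 * (l * l2 - 1) * s + (1 - l) * (1 + l2))) *
          (1 / Real.sqrt (s * (1 - s)))) =
      Real.pi / 2 * ((l2 - l) / Real.sqrt ((1 - l ^ 2) * (l2 ^ 2 - 1)) - 1) :=
  stmt_5_general l l2 h1 h2 h3
end

section
/- Fix real numbers λ ∈ (0, 1) and μ > 0, and for λ₁ > 1 define γ(λ₁) = √((λμ + (1 − λ)μλ₁ + (1 − λ)λ₁²)/(1 − λ + μ)). Then 1 < γ(λ₁) < λ₁ for every λ₁ > 1, and as λ₁ → ∞ one has γ(λ₁) → ∞ and γ(λ₁)/λ₁ → √((1 − λ)/(1 − λ + μ)). -/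
/-!
`γ(λ₁)²` is the weighted mean of `1`, `λ₁`, `λ₁²` with the positive weights `λμ`, `(1 - λ)μ`,
`1 - λ`, whose sum is `1 - λ + μ`; for `λ₁ > 1` it therefore lies strictly between `1` and `λ₁²`.
Substituting `y = λ₁⁻¹` turns `γ(λ₁) / λ₁` into a function continuous at `y = 0`, whose value
there is the claimed limit; since that limit is positive, `γ(λ₁) → ∞` as well.
-/

open Filter Topology

lemma one_lt_quadratic_mean {a b c x : ℝ} (ha : 0 ≤ a) (hb : 0 ≤ b) (hc : 0 < c) (hx : 1 < x) :
    1 < (a + b * x + c * x ^ 2) / (a + b + c) := by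
  rw [one_lt_div (by positivity)]
  nlinarith [mul_le_mul_of_nonneg_left hx.le hb, mul_lt_mul_of_pos_left (one_lt_pow₀ hx two_ne_zero) hc]

lemma quadratic_mean_lt_sq {a b c x : ℝ} (ha : 0 < a) (hb : 0 ≤ b) (hc : 0 ≤ c) (hx : 1 < x) :
    (a + b * x + c * x ^ 2) / (a + b + c) < x ^ 2 := by
  have hxx : x ≤ x ^ 2 := by nlinarith
  rw [div_lt_iff₀ (by positivity)]
  nlinarith [mul_le_mul_of_nonneg_left hxx hb, mul_lt_mul_of_pos_left (one_lt_pow₀ hx two_ne_zero) ha]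

lemma sqrt_quadratic_div_eq_of_pos (a b c d : ℝ) {x : ℝ} (hx : 0 < x) :
    √((a + b * x + c * x ^ 2) / d) / x = √((a * x⁻¹ ^ 2 + b * x⁻¹ + c) / d) := by
  rw [← Real.sqrt_sq hx.le, ← Real.sqrt_div' _ (sq_nonneg x)]
  congr 1
  rw [Real.sqrt_sq hx.le]
  field_simp

lemma tendsto_sqrt_quadratic_div_atTop (a b c d : ℝ) :
    Tendsto (fun x : ℝ => √((a + b * x + c * x ^ 2) / d) / x) atTop (𝓝 √(c / d)) := by
  have hcont : Continuous fun y : ℝ => √((a * y ^ 2 + b * y + c) / d) := by fun_prop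
  have hlim := (hcont.tendsto 0).comp tendsto_inv_atTop_zero
  simp only [ne_eq, OfNat.ofNat_ne_zero, not_false_eq_true, zero_pow, mul_zero, add_zero,
    zero_add] at hlim
  refine hlim.congr' ?_
  filter_upwards [eventually_gt_atTop 0] with x hx
  exact (sqrt_quadratic_div_eq_of_pos a b c d hx).symm

lemma tendsto_atTop_of_div_self_tendsto_pos {f : ℝ → ℝ} {L : ℝ} (hL : 0 < L)
    (hf : Tendsto (fun x => f x / x) atTop (𝓝 L)) : Tendsto f atTop atTop := by
  refine (hf.pos_mul_atTop hL tendsto_id).congr' ?_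
  filter_upwards [eventually_ne_atTop 0] with x hx
  exact div_mul_cancel₀ (f x) hx

theorem stmt_10 (l μ : ℝ) (h0 : 0 < l) (h1 : l < 1) (hμ : 0 < μ) :
    (∀ l1 : ℝ, 1 < l1 →
        1 < Real.sqrt ((l * μ + (1 - l) * μ * l1 + (1 - l) * l1 ^ 2) / (1 - l + μ)) ∧
        Real.sqrt ((l * μ + (1 - l) * μ * l1 + (1 - l) * l1 ^ 2) / (1 - l + μ)) < l1) ∧
    Filter.Tendsto
        (fun l1 : ℝ => Real.sqrt ((l * μ + (1 - l) * μ * l1 + (1 - l) * l1 ^ 2) / (1 - l + μ)))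
        Filter.atTop Filter.atTop ∧
    Filter.Tendsto
        (fun l1 : ℝ =>
          Real.sqrt ((l * μ + (1 - l) * μ * l1 + (1 - l) * l1 ^ 2) / (1 - l + μ)) / l1)
        Filter.atTop (nhds (Real.sqrt ((1 - l) / (1 - l + μ)))) := by
  have hw₀ : 0 < l * μ := mul_pos h0 hμ
  have hw₁ : 0 < (1 - l) * μ := mul_pos (sub_pos.2 h1) hμ
  have hw₂ : 0 < 1 - l := sub_pos.2 h1
  have hsum : 1 - l + μ = l * μ + (1 - l) * μ + (1 - l) := by ring
  have hratio := tendsto_sqrt_quadratic_div_atTop (l * μ) ((1 - l) * μ) (1 - l) (1 - l + μ)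
  refine ⟨fun l1 hl1 => ⟨?_, ?_⟩,
    tendsto_atTop_of_div_self_tendsto_pos (Real.sqrt_pos.2 (by positivity)) hratio, hratio⟩
  · rw [Real.lt_sqrt zero_le_one, one_pow, hsum]
    exact one_lt_quadratic_mean hw₀.le hw₁.le hw₂ hl1
  · rw [Real.sqrt_lt' (by linarith), hsum]
    exact quadratic_mean_lt_sq hw₀ hw₁.le hw₂.le hl1
end

section
/- Fix real numbers λ and λ₂ with 0 < λ < 1 < λ₂ and λλ₂ ≤ 1. Then there exists ε > 0 such that for every λ₁ with 1 < λ₁ < min(1 + ε, λ₂), the improper integral ξ₂(λ₁, λ₂) = ∫_{λ₁}^{λ₂} (t² − b²)/√((t² − λ²)(t² − 1)(t² − λ₁²)(λ₂² − t²)) dt is strictly positive, where b = √((α + √(α² − 4λλ₁λ₂))/2) and α = λ + λ₁ − λ₂ − λλ₁ + λλ₂ + λ₁λ₂. -/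
/-!
Write `t² - b² = (t² - λ₁²) - (b² - λ₁²)`. Against the weight `1 / √(quartic)` the first term
integrates to at least `(λ₂ - λ₁)² / (2 λ₂⁴)`, which stays bounded away from zero as `λ₁ → 1⁺`.
The total mass of the weight does blow up, because of the singularity `((t - 1)(t - λ₁))^(-1/2)`
at `λ₁`, but only like `(λ₁ - 1)^(-1/4)`: by AM-GM, `t - 1 ≥ 2 √((λ₁ - 1)(t - λ₁))`.
On the other hand `b² - λ₁² = O(√(λ₁ - 1))`: at `λ₁ = 1` the discriminant `α² - 4λλ₁λ₂` is the
square `(1 - λλ₂)²`, so `b² = 1` there precisely because `λλ₂ ≤ 1`. Hence the error term is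
`O((λ₁ - 1)^(1/4))` and the integral is positive for `λ₁` close to `1`.
-/

open MeasureTheory Set Filter Topology intervalIntegral

section SingularPower

variable {a b r : ℝ}

lemma integral_sub_rpow (hr : -1 < r) :
    ∫ t in a..b, (t - a) ^ r = (b - a) ^ (r + 1) / (r + 1) := by
  rw [integral_comp_sub_right (fun x => x ^ r), sub_self, integral_rpow (Or.inl hr),
    Real.zero_rpow (by linarith), sub_zero]

lemma integral_rpow_sub (hr : -1 < r) :
    ∫ t in a..b, (b - t) ^ r = (b - a) ^ (r + 1) / (r + 1) := by
  rw [integral_comp_sub_left (fun x => x ^ r), sub_self, integral_rpow (Or.inl hr),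
    Real.zero_rpow (by linarith), sub_zero]

lemma intervalIntegrable_sub_rpow (hr : -1 < r) :
    IntervalIntegrable (fun t => (t - a) ^ r) volume a b := by
  simpa using (intervalIntegrable_rpow' (a := 0) (b := b - a) hr).comp_sub_right a

lemma intervalIntegrable_rpow_sub (hr : -1 < r) :
    IntervalIntegrable (fun t => (b - t) ^ r) volume a b := by
  simpa using ((intervalIntegrable_rpow' (a := 0) (b := b - a) hr).comp_sub_left b).symm

lemma Real.sqrt_mul_sqrt_self_eq_rpow {u : ℝ} (hu : 0 ≤ u) : √(u * √u) = u ^ (3 / 4 : ℝ) := by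
  rw [Real.sqrt_eq_rpow u, ← Real.rpow_one_add' hu (by norm_num), Real.sqrt_eq_rpow,
    ← Real.rpow_mul hu]
  norm_num

end SingularPower

/- `l`, `l1`, `l2` stand for `λ`, `λ₁`, `λ₂`, and `bSq l l1 l2` for `b²`. -/
namespace xi₂

def alpha (l l1 l2 : ℝ) : ℝ := l + l1 - l2 - l * l1 + l * l2 + l1 * l2

noncomputable def bSq (l l1 l2 : ℝ) : ℝ :=
  (alpha l l1 l2 + √(alpha l l1 l2 ^ 2 - 4 * l * l1 * l2)) / 2

def quartic (l l1 l2 t : ℝ) : ℝ :=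
  (t ^ 2 - l ^ 2) * (t ^ 2 - 1) * (t ^ 2 - l1 ^ 2) * (l2 ^ 2 - t ^ 2)

noncomputable def weight (l l1 l2 t : ℝ) : ℝ := (√(quartic l l1 l2 t))⁻¹

end xi₂

open xi₂ in
noncomputable def xi₂ (l l1 l2 : ℝ) : ℝ :=
  ∫ t in l1..l2, (t ^ 2 - bSq l l1 l2) / √(quartic l l1 l2 t)

namespace xi₂

variable {l l1 l2 t : ℝ}

lemma exists_bSq_sub_sq_le (h0 : 0 < l) (h1 : l < 1) (h2 : 1 < l2) (h3 : l * l2 ≤ 1) :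
    ∃ K ≥ 0, ∀ l1, 1 < l1 → l1 ≤ 2 → bSq l l1 l2 - l1 ^ 2 ≤ K * √(l1 - 1) := by
  set D := 1 - l + l2
  set E := 2 * ((1 + l * l2) * D - 2 * l * l2) + D ^ 2
  have hD : 0 < D := by linarith
  have hE : 0 ≤ E := by nlinarith [mul_pos h0 (sub_pos.2 h1), mul_pos h0 (sub_pos.2 h2)]
  refine ⟨(D + √E) / 2, by positivity, fun l1 hl1 hl1' => ?_⟩
  obtain ⟨s, hs0, hs1, rfl⟩ : ∃ s, 0 < s ∧ s ≤ 1 ∧ l1 = 1 + s ^ 2 :=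
    ⟨√(l1 - 1), by positivity, by rw [Real.sqrt_le_one]; linarith,
      by rw [Real.sq_sqrt (by linarith)]; ring⟩
  have halpha : alpha l (1 + s ^ 2) l2 = 1 + l * l2 + D * s ^ 2 := by simp only [alpha, D]; ring
  have hdisc : √((1 + l * l2 + D * s ^ 2) ^ 2 - 4 * l * (1 + s ^ 2) * l2)
      ≤ 1 - l * l2 + √E * s := by
    have hsE : √E ^ 2 = E := Real.sq_sqrt hE
    rw [Real.sqrt_le_left (by positivity)]
    have hs2 : s ^ 2 ≤ 1 := by nlinarith
    nlinarith [mul_nonneg (sub_nonneg.2 h3) (mul_nonneg (Real.sqrt_nonneg E) hs0.le),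
      mul_nonneg (sq_nonneg (D * s)) (sub_nonneg.2 hs2)]
  rw [bSq, halpha, add_sub_cancel_left, Real.sqrt_sq hs0.le]
  nlinarith [mul_nonneg (mul_nonneg hD.le hs0.le) (sub_nonneg.2 hs1)]

lemma quartic_pos (hl : l ^ 2 < 1) (hl1 : 1 < l1) (ht : t ∈ Ioo l1 l2) :
    0 < quartic l l1 l2 t := by
  obtain ⟨ht1, ht2⟩ := ht
  have : l1 ^ 2 < t ^ 2 := by gcongr
  have : t ^ 2 < l2 ^ 2 := by gcongr; linarith
  unfold quartic
  have : 1 < l1 ^ 2 := by nlinarith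
  apply mul_pos (mul_pos (mul_pos _ _) _) <;> linarith

lemma quartic_le (hl1 : 1 < l1) (ht : t ∈ Ioo l1 l2) :
    quartic l l1 l2 t ≤ (l2 ^ 4) ^ 2 := by
  obtain ⟨ht1, ht2⟩ := ht
  have : l1 ^ 2 < t ^ 2 := by gcongr
  have : t ^ 2 < l2 ^ 2 := by gcongr; linarith
  have : 1 < l1 ^ 2 := by nlinarith
  calc quartic l l1 l2 t ≤ l2 ^ 2 * l2 ^ 2 * l2 ^ 2 * l2 ^ 2 := by
        unfold quartic
        gcongr <;> nlinarith
    _ = (l2 ^ 4) ^ 2 := by ring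

lemma le_quartic_left (hl : l ^ 2 ≤ 1) (hl1 : 1 < l1) (ht : t ∈ Ioc l1 ((1 + l2) / 2)) :
    8 * (1 - l ^ 2) * (l2 - 1) * √(l1 - 1) * ((t - l1) * √(t - l1)) ≤ quartic l l1 l2 t := by
  obtain ⟨ht1, ht2⟩ := ht
  have amgm : 2 * √(l1 - 1) * √(t - l1) ≤ t - 1 := by
    nlinarith [sq_nonneg (√(l1 - 1) - √(t - l1)), Real.sq_sqrt (by linarith : 0 ≤ l1 - 1),
      Real.sq_sqrt (by linarith : 0 ≤ t - l1)]
  have h1 : 1 - l ^ 2 ≤ t ^ 2 - l ^ 2 := by nlinarith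
  have h2 : 4 * (√(l1 - 1) * √(t - l1)) ≤ t ^ 2 - 1 := by nlinarith
  have h3 : 2 * (t - l1) ≤ t ^ 2 - l1 ^ 2 := by nlinarith
  have h4 : l2 - 1 ≤ l2 ^ 2 - t ^ 2 := by nlinarith
  have g1 : 0 ≤ t ^ 2 - l ^ 2 := by linarith
  have g12 : 0 ≤ (t ^ 2 - l ^ 2) * (t ^ 2 - 1) := mul_nonneg g1 (by nlinarith)
  have g123 : 0 ≤ (t ^ 2 - l ^ 2) * (t ^ 2 - 1) * (t ^ 2 - l1 ^ 2) := mul_nonneg g12 (by nlinarith)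
  calc 8 * (1 - l ^ 2) * (l2 - 1) * √(l1 - 1) * ((t - l1) * √(t - l1))
      = (1 - l ^ 2) * (4 * (√(l1 - 1) * √(t - l1))) * (2 * (t - l1)) * (l2 - 1) := by ring
    _ ≤ quartic l l1 l2 t := by
      unfold quartic
      gcongr
      linarith

lemma le_quartic_right (hl : l ^ 2 ≤ 1) (hl1 : 1 < l1) (hl1' : l1 ≤ 1 + (l2 - 1) / 4)
    (ht : t ∈ Icc ((1 + l2) / 2) l2) :
    (1 - l ^ 2) * (l2 - 1) ^ 2 * (l2 - t) ≤ quartic l l1 l2 t := by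
  obtain ⟨ht1, ht2⟩ := ht
  have h1 : 1 - l ^ 2 ≤ t ^ 2 - l ^ 2 := by nlinarith
  have h2 : l2 - 1 ≤ t ^ 2 - 1 := by nlinarith
  have h3 : (l2 - 1) / 2 ≤ t ^ 2 - l1 ^ 2 := by nlinarith
  have h4 : 2 * (l2 - t) ≤ l2 ^ 2 - t ^ 2 := by nlinarith
  have g1 : 0 ≤ t ^ 2 - l ^ 2 := by linarith
  have g12 : 0 ≤ (t ^ 2 - l ^ 2) * (t ^ 2 - 1) := mul_nonneg g1 (by linarith)
  have g123 : 0 ≤ (t ^ 2 - l ^ 2) * (t ^ 2 - 1) * (t ^ 2 - l1 ^ 2) := mul_nonneg g12 (by linarith)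
  calc (1 - l ^ 2) * (l2 - 1) ^ 2 * (l2 - t)
      = (1 - l ^ 2) * (l2 - 1) * ((l2 - 1) / 2) * (2 * (l2 - t)) := by ring
    _ ≤ quartic l l1 l2 t := by
      unfold quartic
      gcongr <;> linarith

lemma weight_le_of_le_quartic {c : ℝ} (hc : 0 < c) (h : c ≤ quartic l l1 l2 t) :
    weight l l1 l2 t ≤ (√c)⁻¹ :=
  inv_anti₀ (Real.sqrt_pos.2 hc) (Real.sqrt_le_sqrt h)

lemma exists_weight_le (hl : l ^ 2 < 1) (h2 : 1 < l2) :
    ∃ A B : ℝ, ∀ l1 t, 1 < l1 → l1 ≤ 1 + (l2 - 1) / 4 → t ∈ Ioo l1 l2 →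
      weight l l1 l2 t ≤
        A / √√(l1 - 1) * (t - l1) ^ (-(3 / 4) : ℝ) + B * (l2 - t) ^ (-(1 / 2) : ℝ) := by
  refine ⟨(√(8 * (1 - l ^ 2) * (l2 - 1)))⁻¹, (√((1 - l ^ 2) * (l2 - 1) ^ 2))⁻¹,
    fun l1 t hl1 hl1' ht => ?_⟩
  have hA : 0 < 8 * (1 - l ^ 2) * (l2 - 1) := by nlinarith
  have hB : 0 < (1 - l ^ 2) * (l2 - 1) ^ 2 := by nlinarith
  have hu : 0 < t - l1 := by linarith [ht.1]
  have hv : 0 < l2 - t := by linarith [ht.2]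
  rcases le_total t ((1 + l2) / 2) with htm | htm
  · have h := weight_le_of_le_quartic (by positivity) (le_quartic_left hl.le hl1 ⟨ht.1, htm⟩)
    rw [Real.sqrt_mul (by positivity), Real.sqrt_mul (by positivity),
      Real.sqrt_mul_sqrt_self_eq_rpow hu.le] at h
    rw [Real.rpow_neg hu.le]
    refine h.trans (le_add_of_le_of_nonneg (le_of_eq ?_) (by positivity))
    ring
  · have h := weight_le_of_le_quartic (by positivity)
      (le_quartic_right hl.le hl1 hl1' ⟨htm, ht.2.le⟩)
    rw [Real.sqrt_mul hB.le, Real.sqrt_eq_rpow (l2 - t)] at h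
    rw [Real.rpow_neg hv.le, ← mul_inv]
    exact h.trans (le_add_of_nonneg_left (by positivity))

lemma weight_nonneg : 0 ≤ weight l l1 l2 t := inv_nonneg.2 (Real.sqrt_nonneg _)

lemma measurable_weight : Measurable (weight l l1 l2) := by
  unfold weight quartic
  fun_prop

lemma exists_integral_weight_le (hl : l ^ 2 < 1) (h2 : 1 < l2) :
    ∃ A B : ℝ, ∀ l1, 1 < l1 → l1 ≤ 1 + (l2 - 1) / 4 →
      IntervalIntegrable (weight l l1 l2) volume l1 l2 ∧
      ∫ t in l1..l2, weight l l1 l2 t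
        ≤ A / √√(l1 - 1) * (l2 - l1) ^ (1 / 4 : ℝ) + B * (l2 - l1) ^ (1 / 2 : ℝ) := by
  obtain ⟨A, B, hAB⟩ := exists_weight_le hl h2
  refine ⟨4 * A, 2 * B, fun l1 hl1 hl1' => ?_⟩
  have hl12 : l1 ≤ l2 := by linarith
  have hL := (intervalIntegrable_sub_rpow (a := l1) (b := l2) (r := -(3 / 4))
    (by norm_num)).const_mul (A / √√(l1 - 1))
  have hR := (intervalIntegrable_rpow_sub (a := l1) (b := l2) (r := -(1 / 2))
    (by norm_num)).const_mul B
  have hg := hL.add hR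
  have hw : IntervalIntegrable (weight l l1 l2) volume l1 l2 := by
    refine hg.mono_fun' measurable_weight.aestronglyMeasurable ?_
    rw [uIoc_of_le hl12, ← Measure.restrict_congr_set Ioo_ae_eq_Ioc]
    refine ae_restrict_of_forall_mem measurableSet_Ioo fun t ht => ?_
    exact (Real.norm_of_nonneg weight_nonneg).trans_le (hAB l1 t hl1 hl1' ht)
  refine ⟨hw, (integral_mono_on_of_le_Ioo hl12 hw hg (hAB l1 · hl1 hl1')).trans_eq ?_⟩
  rw [intervalIntegral.integral_add hL hR, intervalIntegral.integral_const_mul,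
    intervalIntegral.integral_const_mul, integral_sub_rpow (by norm_num),
    integral_rpow_sub (by norm_num)]
  norm_num
  ring

lemma integral_sub_sq_mul_weight_ge (hl : l ^ 2 < 1) (hl1 : 1 < l1) (hl12 : l1 ≤ l2)
    (hw : IntervalIntegrable (weight l l1 l2) volume l1 l2) :
    (l2 - l1) ^ 2 / (2 * l2 ^ 4) ≤ ∫ t in l1..l2, (t ^ 2 - l1 ^ 2) * weight l l1 l2 t := by
  have hpoint : ∀ t ∈ Ioo l1 l2, (t - l1) / l2 ^ 4 ≤ (t ^ 2 - l1 ^ 2) * weight l l1 l2 t := by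
    intro t ht
    have hw : (l2 ^ 4)⁻¹ ≤ weight l l1 l2 t := by
      refine inv_anti₀ (Real.sqrt_pos.2 (quartic_pos hl hl1 ht)) ?_
      calc √(quartic l l1 l2 t) ≤ √((l2 ^ 4) ^ 2) := Real.sqrt_le_sqrt (quartic_le hl1 ht)
        _ = l2 ^ 4 := Real.sqrt_sq (by positivity)
    rw [div_eq_mul_inv]
    exact mul_le_mul (by nlinarith [ht.1]) hw (by positivity) (by nlinarith [ht.1])
  calc (l2 - l1) ^ 2 / (2 * l2 ^ 4) = ∫ t in l1..l2, (t - l1) / l2 ^ 4 := by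
        simp
        ring
    _ ≤ _ := integral_mono_on_of_le_Ioo hl12
        ((by fun_prop : Continuous fun t => (t - l1) / l2 ^ 4).intervalIntegrable _ _)
        (hw.continuousOn_mul (by fun_prop)) hpoint

lemma sub_le_xi₂ (hl : l ^ 2 < 1) (hl1 : 1 < l1) (hl12 : l1 ≤ l2) {K E : ℝ} (hK : 0 ≤ K)
    (hB : bSq l l1 l2 - l1 ^ 2 ≤ K * √(l1 - 1))
    (hw : IntervalIntegrable (weight l l1 l2) volume l1 l2)
    (hE : ∫ t in l1..l2, weight l l1 l2 t ≤ E) :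
    (l2 - l1) ^ 2 / (2 * l2 ^ 4) - K * √(l1 - 1) * E ≤ xi₂ l l1 l2 := by
  have hsplit : xi₂ l l1 l2 = (∫ t in l1..l2, (t ^ 2 - l1 ^ 2) * weight l l1 l2 t)
      - (bSq l l1 l2 - l1 ^ 2) * ∫ t in l1..l2, weight l l1 l2 t := by
    rw [xi₂, ← intervalIntegral.integral_const_mul,
      ← intervalIntegral.integral_sub (hw.continuousOn_mul (by fun_prop)) (hw.const_mul _)]
    congr 1 with t
    rw [weight, div_eq_mul_inv]
    ring
  have hw0 : 0 ≤ ∫ t in l1..l2, weight l l1 l2 t :=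
    intervalIntegral.integral_nonneg hl12 fun _ _ => weight_nonneg
  have herr : (bSq l l1 l2 - l1 ^ 2) * ∫ t in l1..l2, weight l l1 l2 t ≤ K * √(l1 - 1) * E :=
    (mul_le_mul_of_nonneg_right hB hw0).trans (mul_le_mul_of_nonneg_left hE (by positivity))
  linarith [integral_sub_sq_mul_weight_ge hl hl1 hl12 hw]

theorem eventually_pos (h0 : 0 < l) (h1 : l < 1) (h2 : 1 < l2) (h3 : l * l2 ≤ 1) :
    ∀ᶠ l1 in 𝓝[>] 1, 0 < xi₂ l l1 l2 := by
  have hl : l ^ 2 < 1 := by nlinarith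
  obtain ⟨K, hK, hB⟩ := exists_bSq_sub_sq_le h0 h1 h2 h3
  obtain ⟨A, B, hw⟩ := exists_integral_weight_le hl h2
  -- `K √(l1 - 1)` times the bound on `∫ weight`, with `√(l1 - 1) / √√(l1 - 1)` cancelled so that
  -- it is continuous at `l1 = 1`, where it vanishes.
  set lower : ℝ → ℝ := fun l1 => (l2 - l1) ^ 2 / (2 * l2 ^ 4) -
    K * (A * √√(l1 - 1) * (l2 - l1) ^ (1 / 4 : ℝ) + B * √(l1 - 1) * (l2 - l1) ^ (1 / 2 : ℝ))
  have hlower : ∀ᶠ l1 in 𝓝 1, 0 < lower l1 := by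
    have hcont : Continuous lower := by fun_prop (disch := norm_num)
    refine continuousAt_const.eventually_lt hcont.continuousAt ?_
    simp only [lower, sub_self, Real.sqrt_zero, mul_zero, zero_mul, add_zero, sub_zero]
    have := sub_pos.2 h2
    positivity
  have hnear : ∀ᶠ l1 in 𝓝[>] (1 : ℝ), l1 ≤ min 2 (1 + (l2 - 1) / 4) :=
    eventually_nhdsWithin_of_eventually_nhds
      (eventually_le_nhds (lt_min (by norm_num) (by linarith)))
  filter_upwards [nhdsWithin_le_nhds hlower, hnear, self_mem_nhdsWithin] with l1 hpos hle hl1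
  obtain ⟨hle1, hle2⟩ := le_min_iff.1 hle
  obtain ⟨hw, hE⟩ := hw l1 hl1 hle2
  refine hpos.trans_le (le_of_eq_of_le ?_
    (sub_le_xi₂ hl hl1 (by linarith) hK (hB l1 hl1 hle1) hw hE))
  have hs : 0 < √√(l1 - 1) := Real.sqrt_pos.2 (Real.sqrt_pos.2 (sub_pos.2 hl1))
  have hsq : √(l1 - 1) = √√(l1 - 1) ^ 2 := (Real.sq_sqrt (Real.sqrt_nonneg _)).symm
  simp only [lower]
  set s := √√(l1 - 1)
  rw [hsq]
  field_simp

end xi₂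

theorem stmt_11 (l l2 : ℝ) (h0 : 0 < l) (h1 : l < 1) (h2 : 1 < l2) (h3 : l * l2 ≤ 1) :
    ∃ ε > (0 : ℝ), ∀ l1 : ℝ, 1 < l1 → l1 < min (1 + ε) l2 →
      0 < ∫ t in l1..l2,
          (t ^ 2 -
              (l + l1 - l2 - l * l1 + l * l2 + l1 * l2 +
                  Real.sqrt ((l + l1 - l2 - l * l1 + l * l2 + l1 * l2) ^ 2 - 4 * l * l1 * l2)) /
                2) /
            Real.sqrt ((t ^ 2 - l ^ 2) * (t ^ 2 - 1) * (t ^ 2 - l1 ^ 2) * (l2 ^ 2 - t ^ 2)) := by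
  obtain ⟨u, hu, h⟩ := (nhdsGT_basis (1 : ℝ)).eventually_iff.1 (xi₂.eventually_pos h0 h1 h2 h3)
  refine ⟨u - 1, by linarith, fun l1 hl1 hl1u => h ⟨hl1, ?_⟩⟩
  linarith [min_le_left (1 + (u - 1)) l2]
end

section
/- Fix a real number λ₁ > 0. Then the improper integral ∫_{λ₁}^{λ₂} dt/√((t² − λ₁²)(λ₂² − t²)), viewed as a function of λ₂ ∈ (λ₁, ∞), tends to π/(2λ₁) as λ₂ → λ₁ from the right. -/
/-!
Factor `(t² - a²)(b² - t²) = (t - a)(b - t) · (t + a)(b + t)`. The first factor carries both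
endpoint singularities and `∫_a^b dt / √((t - a)(b - t)) = π` (an antiderivative is an affine
arcsine). On `[a, b]` the second factor lies between `2a(a + b)` and `2b(a + b)`, so the integral is
squeezed between `π / √(2b(a + b))` and `π / √(2a(a + b))`, both of which tend to `π / (2a)`.
-/

open Filter Topology MeasureTheory Set Real

section Arcsine

variable {a b : ℝ}

lemma hasDerivAt_arcsin_affine (hab : a < b) {t : ℝ} (ht : t ∈ Ioo a b) :
    HasDerivAt (fun t ↦ arcsin ((2 * t - a - b) / (b - a)))
      (1 / √((t - a) * (b - t))) t := by
  obtain ⟨hta, htb⟩ := ht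
  have hba : 0 < b - a := by linarith
  set u := (2 * t - a - b) / (b - a)
  have hu₁ : -1 < u := by rw [lt_div_iff₀ hba]; linarith
  have hu₂ : u < 1 := by rw [div_lt_one hba]; linarith
  have hlin : HasDerivAt (fun t : ℝ ↦ (2 * t - a - b) / (b - a)) (2 / (b - a)) t := by
    simpa using (((hasDerivAt_id t).const_mul 2).sub_const a |>.sub_const b).div_const (b - a)
  refine ((hasDerivAt_arcsin hu₁.ne' hu₂.ne).comp t hlin).congr_deriv ?_
  have h1 : 1 - u ^ 2 = (2 / (b - a)) ^ 2 * ((t - a) * (b - t)) := by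
    unfold u; field_simp; ring
  rw [h1, sqrt_mul (by positivity), sqrt_sq (by positivity)]
  have : 0 < √((t - a) * (b - t)) := sqrt_pos.2 (by nlinarith)
  field_simp

lemma intervalIntegrable_inv_sqrt_sub_mul_sub (hab : a < b) :
    IntervalIntegrable (fun t ↦ 1 / √((t - a) * (b - t))) volume a b :=
  (intervalIntegrable_iff_integrableOn_Ioc_of_le hab.le).2 <|
    intervalIntegral.integrableOn_deriv_of_nonneg (by fun_prop)
      (fun _ ↦ hasDerivAt_arcsin_affine hab) fun _ _ ↦ by positivity

lemma integral_inv_sqrt_sub_mul_sub (hab : a < b) :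
    ∫ t in a..b, 1 / √((t - a) * (b - t)) = π := by
  have hba : b - a ≠ 0 := by linarith
  rw [intervalIntegral.integral_eq_sub_of_hasDerivAt_of_le hab.le (by fun_prop)
    (fun _ ↦ hasDerivAt_arcsin_affine hab) (intervalIntegrable_inv_sqrt_sub_mul_sub hab)]
  rw [show (2 * b - a - b) / (b - a) = 1 by field_simp; ring,
    show (2 * a - a - b) / (b - a) = -1 by field_simp; ring, arcsin_one, arcsin_neg, arcsin_one]
  ring

end Arcsine

lemma integral_mul_le_mul_integral_of_le {f g : ℝ → ℝ} {a b C : ℝ} (hab : a ≤ b)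
    (hf : IntervalIntegrable f volume a b) (hf₀ : ∀ t ∈ Icc a b, 0 ≤ f t)
    (hg : ContinuousOn g (Icc a b)) (hgC : ∀ t ∈ Icc a b, g t ≤ C) :
    ∫ t in a..b, f t * g t ≤ C * ∫ t in a..b, f t := by
  rw [← intervalIntegral.integral_const_mul]
  refine intervalIntegral.integral_mono_on hab (hf.mul_continuousOn (by rwa [uIcc_of_le hab]))
    (hf.const_mul C) fun t ht ↦ ?_
  rw [mul_comm C]
  exact mul_le_mul_of_nonneg_left (hgC t ht) (hf₀ t ht)

lemma mul_integral_le_integral_mul_of_le {f g : ℝ → ℝ} {a b c : ℝ} (hab : a ≤ b)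
    (hf : IntervalIntegrable f volume a b) (hf₀ : ∀ t ∈ Icc a b, 0 ≤ f t)
    (hg : ContinuousOn g (Icc a b)) (hcg : ∀ t ∈ Icc a b, c ≤ g t) :
    c * ∫ t in a..b, f t ≤ ∫ t in a..b, f t * g t := by
  rw [← intervalIntegral.integral_const_mul]
  refine intervalIntegral.integral_mono_on hab (hf.const_mul c)
    (hf.mul_continuousOn (by rwa [uIcc_of_le hab])) fun t ht ↦ ?_
  rw [mul_comm c]
  exact mul_le_mul_of_nonneg_left (hcg t ht) (hf₀ t ht)

section Squeeze

variable {a b : ℝ}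

lemma inv_sqrt_sq_sub_mul_sq_sub_eq {t : ℝ} (ht : t ∈ Icc a b) :
    1 / √((t ^ 2 - a ^ 2) * (b ^ 2 - t ^ 2)) =
      1 / √((t - a) * (b - t)) * (1 / √((t + a) * (b + t))) := by
  obtain ⟨hat, htb⟩ := ht
  rw [show (t ^ 2 - a ^ 2) * (b ^ 2 - t ^ 2) = (t - a) * (b - t) * ((t + a) * (b + t)) by ring,
    sqrt_mul (by nlinarith), one_div_mul_one_div]

lemma integral_inv_sqrt_sq_sub_mul_sq_sub_mem_Icc (ha : 0 < a) (hab : a < b) :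
    ∫ t in a..b, 1 / √((t ^ 2 - a ^ 2) * (b ^ 2 - t ^ 2)) ∈
      Icc (π / √(2 * b * (a + b))) (π / √(2 * a * (a + b))) := by
  rw [intervalIntegral.integral_congr fun t ht ↦
    inv_sqrt_sq_sub_mul_sq_sub_eq (uIcc_of_le hab.le ▸ ht)]
  have hg := intervalIntegrable_inv_sqrt_sub_mul_sub hab
  have hg₀ : ∀ t ∈ Icc a b, 0 ≤ 1 / √((t - a) * (b - t)) := fun _ _ ↦ by positivity
  have hw : ContinuousOn (fun t ↦ 1 / √((t + a) * (b + t))) (Icc a b) :=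
    continuousOn_const.div (by fun_prop) fun t ⟨hat, _⟩ ↦ (sqrt_pos.2 (by nlinarith)).ne'
  have hgπ := integral_inv_sqrt_sub_mul_sub hab
  constructor
  · calc π / √(2 * b * (a + b))
          = 1 / √(2 * b * (a + b)) * ∫ t in a..b, 1 / √((t - a) * (b - t)) := by
            rw [hgπ]; ring
      _ ≤ _ := mul_integral_le_integral_mul_of_le hab.le hg hg₀ hw fun t ⟨hat, htb⟩ ↦
          one_div_le_one_div_of_le (sqrt_pos.2 (by nlinarith)) (sqrt_le_sqrt (by nlinarith))
  · calc _ ≤ 1 / √(2 * a * (a + b)) * ∫ t in a..b, 1 / √((t - a) * (b - t)) :=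
          integral_mul_le_mul_integral_of_le hab.le hg hg₀ hw fun t ⟨hat, htb⟩ ↦
            one_div_le_one_div_of_le (sqrt_pos.2 (by nlinarith)) (sqrt_le_sqrt (by nlinarith))
      _ = π / √(2 * a * (a + b)) := by rw [hgπ]; ring

end Squeeze

theorem stmt_13 (l1 : ℝ) (h : 0 < l1) :
    Filter.Tendsto
      (fun l2 : ℝ =>
        ∫ t in l1..l2, 1 / Real.sqrt ((t ^ 2 - l1 ^ 2) * (l2 ^ 2 - t ^ 2)))
      (nhdsWithin l1 (Set.Ioi l1)) (nhds (Real.pi / (2 * l1))) := by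
  have hlim : ∀ u : ℝ → ℝ, Continuous u → u l1 = l1 →
      Tendsto (fun b ↦ π / √(2 * u b * (l1 + b))) (𝓝[>] l1) (𝓝 (π / (2 * l1))) := by
    intro u hu hul
    have hval : √(2 * u l1 * (l1 + l1)) = 2 * l1 := by
      rw [hul, show 2 * l1 * (l1 + l1) = (2 * l1) ^ 2 by ring, sqrt_sq (by positivity)]
    rw [← hval]
    refine (tendsto_const_nhds.div (Continuous.tendsto (by fun_prop) l1) ?_).mono_left
      nhdsWithin_le_nhds
    rw [hval]; positivity
  refine tendsto_of_tendsto_of_tendsto_of_le_of_le' (hlim (fun b ↦ b) continuous_id rfl)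
    (hlim (fun _ ↦ l1) continuous_const rfl) ?_ ?_ <;>
  filter_upwards [self_mem_nhdsWithin] with b hb
  exacts [(integral_inv_sqrt_sq_sub_mul_sq_sub_mem_Icc h hb).1,
    (integral_inv_sqrt_sq_sub_mul_sq_sub_mem_Icc h hb).2]
end

section
/- Fix real numbers λ and λ₁ with 0 < λ < 1 < λ₁. Then there exists N > λ₁ such that for every λ₂ > N, the improper integral ξ₂(λ₁, λ₂) = ∫_{λ₁}^{λ₂} (t² − b²)/√((t² − λ²)(t² − 1)(t² − λ₁²)(λ₂² − t²)) dt is strictly negative, where b = √((α + √(α² − 4λλ₁λ₂))/2) and α = λ + λ₁ − λ₂ − λλ₁ + λλ₂ + λ₁λ₂. -/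
/-!
Write `P(t)` for the radicand and split the integrand as
`(t² - λ₁²)/√P - (b² - λ₁²)/√P`. Near each endpoint `P` vanishes to first order, so both pieces
are dominated by a multiple of `1/√((t - a)(λ₂ - t))`, whose integral is bounded independently of
the interval. For large `λ₂`:
* `(t² - λ₁²)/√P ≤ 1/√((1 - λ²) λ₂ t (λ₂ - t))`, so the first integral is `O(λ₂^{-1/2})`;
* `b² ≥ α/2 ≥ (λ + λ₁ - 1) λ₂ / 2` grows linearly, while `1/√P ≥ 1/(8 λ₁³ λ₂)` on `[λ₁, 2λ₁]`,
  so the second term stays above the positive constant `(λ + λ₁ - 1)/(32 λ₁²)`.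
-/

open Real Set MeasureTheory
open scoped Interval

theorem inv_sqrt_mul_le {x y : ℝ} (hx : 0 < x) (hy : 0 < y) :
    (√(x * y))⁻¹ ≤ ((√x)⁻¹ + (√y)⁻¹) / √(x + y) := by
  have hsx := sqrt_pos.2 hx
  have hsy := sqrt_pos.2 hy
  have hsub : √(x + y) ≤ √x + √y :=
    sqrt_le_iff.2 ⟨by positivity, by nlinarith [sq_sqrt hx.le, sq_sqrt hy.le]⟩
  rw [sqrt_mul hx.le, le_div_iff₀ (sqrt_pos.2 (by positivity))]
  calc (√x * √y)⁻¹ * √(x + y) ≤ (√x * √y)⁻¹ * (√x + √y) := by gcongr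
    _ = (√x)⁻¹ + (√y)⁻¹ := by field_simp; ring

theorem inv_sqrt_mul_sub_mul_sub_le {K a b t : ℝ} (hK : 0 < K) (ht : t ∈ Ioo a b) :
    (√(K * ((t - a) * (b - t))))⁻¹ ≤ ((√(t - a))⁻¹ + (√(b - t))⁻¹) / (√K * √(b - a)) := by
  have h := inv_sqrt_mul_le (sub_pos.2 ht.1) (sub_pos.2 ht.2)
  rw [sub_add_sub_cancel'] at h
  rw [sqrt_mul hK.le, mul_inv, mul_comm (√K), ← div_div, div_eq_mul_inv _ (√K), mul_comm]
  exact mul_le_mul_of_nonneg_right h (by positivity)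

theorem div_sqrt_le_inv_sqrt {u P X : ℝ} (hu : 0 ≤ u) (hX : 0 < X) (h : u ^ 2 * X ≤ P) :
    u / √P ≤ (√X)⁻¹ := by
  rcases hu.eq_or_lt with rfl | hu
  · rw [zero_div]
    positivity
  have hP : 0 < P := lt_of_lt_of_le (by positivity) h
  rw [div_le_iff₀ (sqrt_pos.2 hP), inv_mul_eq_div, le_div_iff₀ (sqrt_pos.2 hX),
    ← sqrt_sq hu.le, ← sqrt_mul (sq_nonneg u)]
  exact sqrt_le_sqrt h

section InvSqrt

variable {a b c : ℝ}

theorem eqOn_inv_sqrt_rpow (hc : 0 ≤ c) :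
    EqOn (fun x : ℝ => (√x)⁻¹) (fun x => x ^ (-(1 / 2) : ℝ)) [[0, c]] := by
  intro x hx
  rw [uIcc_of_le hc] at hx
  simp only [rpow_neg hx.1, sqrt_eq_rpow]

theorem intervalIntegrable_inv_sqrt (hc : 0 ≤ c) :
    IntervalIntegrable (fun x : ℝ => (√x)⁻¹) volume 0 c :=
  (intervalIntegral.intervalIntegrable_rpow' (r := -(1 / 2)) (by norm_num)).congr
    ((eqOn_inv_sqrt_rpow hc).symm.mono uIoc_subset_uIcc)

theorem integral_inv_sqrt (hc : 0 ≤ c) : ∫ x in 0..c, (√x)⁻¹ = 2 * √c := by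
  rw [intervalIntegral.integral_congr (eqOn_inv_sqrt_rpow hc), integral_rpow (by norm_num),
    sqrt_eq_rpow]
  norm_num
  ring

theorem intervalIntegrable_inv_sqrt_sub_right (hab : a ≤ b) :
    IntervalIntegrable (fun t => (√(t - a))⁻¹) volume a b := by
  simpa using (intervalIntegrable_inv_sqrt (sub_nonneg.2 hab)).comp_sub_right a

theorem intervalIntegrable_inv_sqrt_sub_left (hab : a ≤ b) :
    IntervalIntegrable (fun t => (√(b - t))⁻¹) volume a b := by
  simpa using (intervalIntegrable_inv_sqrt (sub_nonneg.2 hab)).symm.comp_sub_left b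

theorem intervalIntegrable_inv_sqrt_sub_add (hac : a ≤ c) (hcb : c ≤ b) :
    IntervalIntegrable (fun t => (√(t - a))⁻¹ + (√(b - t))⁻¹) volume c b := by
  have hab := hac.trans hcb
  refine ((intervalIntegrable_inv_sqrt_sub_right hab).add
    (intervalIntegrable_inv_sqrt_sub_left hab)).mono_set ?_
  rw [uIcc_of_le hcb, uIcc_of_le hab]
  exact Icc_subset_Icc_left hac

theorem integral_inv_sqrt_sub_add (hab : a ≤ b) :
    ∫ t in a..b, ((√(t - a))⁻¹ + (√(b - t))⁻¹) = 4 * √(b - a) := by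
  rw [intervalIntegral.integral_add (intervalIntegrable_inv_sqrt_sub_right hab)
      (intervalIntegrable_inv_sqrt_sub_left hab),
    intervalIntegral.integral_comp_sub_right (fun x => (√x)⁻¹),
    intervalIntegral.integral_comp_sub_left (fun x => (√x)⁻¹), sub_self, sub_self,
    integral_inv_sqrt (sub_nonneg.2 hab)]
  ring

end InvSqrt

section Domination

variable {f : ℝ → ℝ} {a b c K : ℝ}

theorem ae_restrict_uIoc_mem_Ioo (hcb : c ≤ b) : ∀ᵐ t ∂volume.restrict (Ι c b), t ∈ Ioo c b := by
  rw [uIoc_of_le hcb, ← Measure.restrict_congr_set Ioo_ae_eq_Ioc]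
  exact ae_restrict_mem measurableSet_Ioo

theorem IntervalIntegrable.of_le_inv_sqrt_mul_sub_mul_sub (hac : a ≤ c) (hcb : c ≤ b)
    (hK : 0 < K) (hfm : AEStronglyMeasurable f (volume.restrict (Ι c b)))
    (hf0 : ∀ t ∈ Ioo c b, 0 ≤ f t) (hf : ∀ t ∈ Ioo c b, f t ≤ (√(K * ((t - a) * (b - t))))⁻¹) :
    IntervalIntegrable f volume c b := by
  refine ((intervalIntegrable_inv_sqrt_sub_add hac hcb).div_const (√K * √(b - a))).mono_fun'
    hfm ?_
  filter_upwards [ae_restrict_uIoc_mem_Ioo hcb] with t ht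
  rw [norm_of_nonneg (hf0 t ht)]
  exact (hf t ht).trans (inv_sqrt_mul_sub_mul_sub_le hK ⟨hac.trans_lt ht.1, ht.2⟩)

theorem integral_le_of_le_inv_sqrt_mul_sub_mul_sub (hac : a ≤ c) (hcb : c ≤ b)
    (hK : 0 < K) (hfm : AEStronglyMeasurable f (volume.restrict (Ι c b)))
    (hf0 : ∀ t ∈ Ioo c b, 0 ≤ f t) (hf : ∀ t ∈ Ioo c b, f t ≤ (√(K * ((t - a) * (b - t))))⁻¹) :
    ∫ t in c..b, f t ≤ 4 / √K := by
  rcases hcb.eq_or_lt with rfl | hcb'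
  · rw [intervalIntegral.integral_same]
    positivity
  have hab : a < b := hac.trans_lt hcb'
  set g : ℝ → ℝ := fun t => ((√(t - a))⁻¹ + (√(b - t))⁻¹) / (√K * √(b - a))
  calc ∫ t in c..b, f t ≤ ∫ t in c..b, g t :=
        intervalIntegral.integral_mono_on_of_le_Ioo hcb
          (IntervalIntegrable.of_le_inv_sqrt_mul_sub_mul_sub hac hcb hK hfm hf0 hf)
          ((intervalIntegrable_inv_sqrt_sub_add hac hcb).div_const _)
          fun t ht => (hf t ht).trans (inv_sqrt_mul_sub_mul_sub_le hK ⟨hac.trans_lt ht.1, ht.2⟩)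
    _ ≤ ∫ t in a..b, g t :=
        intervalIntegral.integral_mono_interval hac hcb le_rfl
          (ae_of_all _ fun t => by positivity)
          ((intervalIntegrable_inv_sqrt_sub_add le_rfl hab.le).div_const _)
    _ = 4 / √K := by
        rw [intervalIntegral.integral_div, integral_inv_sqrt_sub_add hab.le]
        have : √(b - a) ≠ 0 := (sqrt_pos.2 (sub_pos.2 hab)).ne'
        field_simp

end Domination

namespace Xi2

def radicand (l l1 l2 t : ℝ) : ℝ :=
  (t ^ 2 - l ^ 2) * (t ^ 2 - 1) * (t ^ 2 - l1 ^ 2) * (l2 ^ 2 - t ^ 2)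

def alpha (l l1 l2 : ℝ) : ℝ := l + l1 - l2 - l * l1 + l * l2 + l1 * l2

noncomputable def bSq (l l1 l2 : ℝ) : ℝ :=
  (alpha l l1 l2 + √(alpha l l1 l2 ^ 2 - 4 * l * l1 * l2)) / 2

variable {l l1 l2 t : ℝ}

theorem radicand_factors_pos (h0 : 0 < l) (h1 : l < 1) (h2 : 1 < l1) (ht : t ∈ Ioo l1 l2) :
    0 < t ^ 2 - l ^ 2 ∧ 0 < t ^ 2 - 1 ∧ 0 < t ^ 2 - l1 ^ 2 ∧ 0 < l2 ^ 2 - t ^ 2 := by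
  obtain ⟨ht1, ht2⟩ := ht
  refine ⟨?_, ?_, ?_, ?_⟩ <;> nlinarith

theorem inv_sqrt_radicand_le (h0 : 0 < l) (h1 : l < 1) (h2 : 1 < l1) (ht : t ∈ Ioo l1 l2) :
    (√(radicand l l1 l2 t))⁻¹ ≤
      (√((l1 ^ 2 - l ^ 2) * (l1 ^ 2 - 1) * l1 ^ 2 * ((t - l1) * (l2 - t))))⁻¹ := by
  obtain ⟨p1, p2, -, -⟩ := radicand_factors_pos h0 h1 h2 ht
  obtain ⟨ht1, ht2⟩ := ht
  have : 0 < t - l1 := by linarith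
  have : 0 < l2 - t := by linarith
  have : 0 < l1 ^ 2 - l ^ 2 := by nlinarith
  have : 0 < l1 ^ 2 - 1 := by nlinarith
  rw [← one_div]
  refine div_sqrt_le_inv_sqrt zero_le_one (by positivity) ?_
  calc 1 ^ 2 * ((l1 ^ 2 - l ^ 2) * (l1 ^ 2 - 1) * l1 ^ 2 * ((t - l1) * (l2 - t)))
      = (l1 ^ 2 - l ^ 2) * (l1 ^ 2 - 1) * (l1 * l1) * ((t - l1) * (l2 - t)) := by ring
    _ ≤ (t ^ 2 - l ^ 2) * (t ^ 2 - 1) * ((t + l1) * (l2 + t)) * ((t - l1) * (l2 - t)) := by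
      gcongr
      all_goals nlinarith
    _ = radicand l l1 l2 t := by unfold radicand; ring

theorem sub_div_sqrt_radicand_le (h0 : 0 < l) (h1 : l < 1) (h2 : 1 < l1) (ht : t ∈ Ioo l1 l2) :
    (t ^ 2 - l1 ^ 2) / √(radicand l l1 l2 t) ≤ (√((1 - l ^ 2) * l2 * (t * (l2 - t))))⁻¹ := by
  obtain ⟨p1, p2, p3, p4⟩ := radicand_factors_pos h0 h1 h2 ht
  obtain ⟨ht1, ht2⟩ := ht
  have : 0 < l2 - t := by linarith
  have : 0 < 1 - l ^ 2 := by nlinarith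
  have : 0 < t := by linarith
  have : 0 < l2 := by linarith
  refine div_sqrt_le_inv_sqrt p3.le (by positivity) ?_
  calc (t ^ 2 - l1 ^ 2) ^ 2 * ((1 - l ^ 2) * l2 * (t * (l2 - t)))
      = (t ^ 2 - l1 ^ 2) * ((t ^ 2 - l1 ^ 2) * ((1 - l ^ 2) * t) * (l2 * (l2 - t))) := by ring
    _ ≤ (t ^ 2 - l1 ^ 2) * ((t ^ 2 - 1) * (t ^ 2 - l ^ 2) * (l2 ^ 2 - t ^ 2)) := by
      gcongr
      all_goals nlinarith
    _ = radicand l l1 l2 t := by unfold radicand; ring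

theorem inv_le_inv_sqrt_radicand (h0 : 0 < l) (h1 : l < 1) (h2 : 1 < l1) (hl2 : 2 * l1 ≤ l2)
    (ht : t ∈ Ioo l1 (2 * l1)) : (8 * l1 ^ 3 * l2)⁻¹ ≤ (√(radicand l l1 l2 t))⁻¹ := by
  obtain ⟨p1, p2, p3, p4⟩ := radicand_factors_pos h0 h1 h2 ⟨ht.1, ht.2.trans_le hl2⟩
  obtain ⟨ht1, ht2⟩ := ht
  have : 0 < t := by linarith
  have : 0 < l2 := by linarith
  have hP : 0 < radicand l l1 l2 t := by unfold radicand; positivity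
  refine inv_anti₀ (sqrt_pos.2 hP) (sqrt_le_iff.2 ⟨by positivity, ?_⟩)
  calc radicand l l1 l2 t ≤ t ^ 2 * t ^ 2 * t ^ 2 * l2 ^ 2 := by
        unfold radicand
        gcongr
        all_goals nlinarith
    _ ≤ (2 * l1) ^ 2 * (2 * l1) ^ 2 * (2 * l1) ^ 2 * l2 ^ 2 := by gcongr
    _ = (8 * l1 ^ 3 * l2) ^ 2 := by ring

theorem intervalIntegrable_inv_sqrt_radicand (h0 : 0 < l) (h1 : l < 1) (h2 : 1 < l1)
    (hl12 : l1 ≤ l2) : IntervalIntegrable (fun t => (√(radicand l l1 l2 t))⁻¹) volume l1 l2 := by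
  have : 0 < l1 ^ 2 - l ^ 2 := by nlinarith
  have : 0 < l1 ^ 2 - 1 := by nlinarith
  exact IntervalIntegrable.of_le_inv_sqrt_mul_sub_mul_sub le_rfl hl12 (by positivity)
    (by unfold radicand; fun_prop) (fun t _ => by positivity)
    fun t ht => inv_sqrt_radicand_le h0 h1 h2 ht

section SubDivSqrtRadicand

variable (h0 : 0 < l) (h1 : l < 1) (h2 : 1 < l1) (hl12 : l1 ≤ l2)
include h0 h1 h2 hl12

theorem intervalIntegrable_sub_div_sqrt_radicand :
    IntervalIntegrable (fun t => (t ^ 2 - l1 ^ 2) / √(radicand l l1 l2 t)) volume l1 l2 := by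
  have : 0 < 1 - l ^ 2 := by nlinarith
  have : 0 < l2 := by linarith
  refine IntervalIntegrable.of_le_inv_sqrt_mul_sub_mul_sub (a := 0) (K := (1 - l ^ 2) * l2)
    (by linarith) hl12 (by positivity)
    (Measurable.aestronglyMeasurable (by unfold radicand; fun_prop))
    (fun t ht => div_nonneg (radicand_factors_pos h0 h1 h2 ht).2.2.1.le (sqrt_nonneg _))
    fun t ht => ?_
  rw [sub_zero]
  exact sub_div_sqrt_radicand_le h0 h1 h2 ht

theorem integral_sub_div_sqrt_radicand_le :
    ∫ t in l1..l2, (t ^ 2 - l1 ^ 2) / √(radicand l l1 l2 t) ≤ 4 / √((1 - l ^ 2) * l2) := by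
  have : 0 < 1 - l ^ 2 := by nlinarith
  have : 0 < l2 := by linarith
  refine integral_le_of_le_inv_sqrt_mul_sub_mul_sub (a := 0) (K := (1 - l ^ 2) * l2)
    (by linarith) hl12 (by positivity)
    (Measurable.aestronglyMeasurable (by unfold radicand; fun_prop))
    (fun t ht => div_nonneg (radicand_factors_pos h0 h1 h2 ht).2.2.1.le (sqrt_nonneg _))
    fun t ht => ?_
  rw [sub_zero]
  exact sub_div_sqrt_radicand_le h0 h1 h2 ht

end SubDivSqrtRadicand

theorem inv_le_integral_inv_sqrt_radicand (h0 : 0 < l) (h1 : l < 1) (h2 : 1 < l1)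
    (hl2 : 2 * l1 ≤ l2) :
    (8 * l1 ^ 2 * l2)⁻¹ ≤ ∫ t in l1..l2, (√(radicand l l1 l2 t))⁻¹ := by
  have hl1 : 0 < l1 := by linarith
  have hint := intervalIntegrable_inv_sqrt_radicand h0 h1 h2 (by linarith)
  calc (8 * l1 ^ 2 * l2)⁻¹ = ∫ t in l1..2 * l1, (8 * l1 ^ 3 * l2)⁻¹ := by
        rw [intervalIntegral.integral_const, smul_eq_mul]
        field_simp
        ring
    _ ≤ ∫ t in l1..2 * l1, (√(radicand l l1 l2 t))⁻¹ :=
        intervalIntegral.integral_mono_on_of_le_Ioo (by linarith) intervalIntegrable_const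
          (hint.mono_set (uIcc_subset_uIcc_left (by
            rw [uIcc_of_le (by linarith)]
            exact ⟨by linarith, hl2⟩)))
          fun t ht => inv_le_inv_sqrt_radicand h0 h1 h2 hl2 ht
    _ ≤ ∫ t in l1..l2, (√(radicand l l1 l2 t))⁻¹ :=
        intervalIntegral.integral_mono_interval le_rfl (by linarith) hl2
          (ae_of_all _ fun t => by positivity) hint

theorem le_bSq (h0 : 0 < l) (h1 : l < 1) (h2 : 1 < l1) : (l + l1 - 1) * l2 / 2 ≤ bSq l l1 l2 := by
  have := sqrt_nonneg (alpha l l1 l2 ^ 2 - 4 * l * l1 * l2)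
  unfold bSq alpha at *
  nlinarith [mul_pos h0 (sub_pos.2 h1)]

theorem integral_eq_sub (B : ℝ)
    (hg : IntervalIntegrable (fun t => (t ^ 2 - l1 ^ 2) / √(radicand l l1 l2 t)) volume l1 l2)
    (hw : IntervalIntegrable (fun t => (√(radicand l l1 l2 t))⁻¹) volume l1 l2) :
    ∫ t in l1..l2, (t ^ 2 - B) / √(radicand l l1 l2 t) =
      (∫ t in l1..l2, (t ^ 2 - l1 ^ 2) / √(radicand l l1 l2 t)) -
        (B - l1 ^ 2) * ∫ t in l1..l2, (√(radicand l l1 l2 t))⁻¹ := by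
  rw [← intervalIntegral.integral_const_mul, ← intervalIntegral.integral_sub hg (hw.const_mul _)]
  congr 1 with t
  ring

theorem integral_neg (h0 : 0 < l) (h1 : l < 1) (h2 : 1 < l1) (hl2 : 2 * l1 ≤ l2)
    (hb : 4 * l1 ^ 2 < (l + l1 - 1) * l2)
    (hxi : (128 * l1 ^ 2) ^ 2 < (l + l1 - 1) ^ 2 * (1 - l ^ 2) * l2) :
    ∫ t in l1..l2, (t ^ 2 - bSq l l1 l2) / √(radicand l l1 l2 t) < 0 := by
  set κ := l + l1 - 1
  have hκ : 0 < κ := by linarith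
  have : 0 < 1 - l ^ 2 := by nlinarith
  have : 0 < l1 := by linarith
  have : 0 < l2 := by linarith
  have hG_small : 4 / √((1 - l ^ 2) * l2) < κ / (32 * l1 ^ 2) := by
    have hsqrt : 128 * l1 ^ 2 < κ * √((1 - l ^ 2) * l2) := by
      rw [← sqrt_sq hκ.le, ← sqrt_mul (sq_nonneg κ), lt_sqrt (by positivity)]
      linarith
    rw [div_lt_div_iff₀ (sqrt_pos.2 (by positivity)) (by positivity)]
    linarith
  have hbSq : κ * l2 / 4 ≤ bSq l l1 l2 - l1 ^ 2 := by linarith [le_bSq (l2 := l2) h0 h1 h2]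
  have hl12 : l1 ≤ l2 := by linarith
  have hG := integral_sub_div_sqrt_radicand_le h0 h1 h2 hl12
  have hW := inv_le_integral_inv_sqrt_radicand h0 h1 h2 hl2
  rw [integral_eq_sub _ (intervalIntegrable_sub_div_sqrt_radicand h0 h1 h2 hl12)
    (intervalIntegrable_inv_sqrt_radicand h0 h1 h2 hl12)]
  calc _ ≤ 4 / √((1 - l ^ 2) * l2) - κ * l2 / 4 * (8 * l1 ^ 2 * l2)⁻¹ := by
        gcongr
        exact hbSq.trans' (by positivity)
    _ = 4 / √((1 - l ^ 2) * l2) - κ / (32 * l1 ^ 2) := by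
        field_simp
        ring
    _ < 0 := by linarith

end Xi2

theorem stmt_18 (l l1 : ℝ) (h0 : 0 < l) (h1 : l < 1) (h2 : 1 < l1) :
    ∃ N > l1, ∀ l2 : ℝ, N < l2 →
      (∫ t in l1..l2,
          (t ^ 2 -
              (l + l1 - l2 - l * l1 + l * l2 + l1 * l2 +
                  Real.sqrt ((l + l1 - l2 - l * l1 + l * l2 + l1 * l2) ^ 2 - 4 * l * l1 * l2)) /
                2) /
            Real.sqrt ((t ^ 2 - l ^ 2) * (t ^ 2 - 1) * (t ^ 2 - l1 ^ 2) * (l2 ^ 2 - t ^ 2))) <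
        0 := by
  have hκ : 0 < l + l1 - 1 := by linarith
  have hl : 0 < 1 - l ^ 2 := by nlinarith
  refine ⟨max (2 * l1) (max (4 * l1 ^ 2 / (l + l1 - 1))
      ((128 * l1 ^ 2) ^ 2 / ((l + l1 - 1) ^ 2 * (1 - l ^ 2)))),
    lt_max_of_lt_left (by linarith), fun l2 hl2 => ?_⟩
  have hκl : 0 < (l + l1 - 1) ^ 2 * (1 - l ^ 2) := by positivity
  simp only [max_lt_iff, div_lt_iff₀ hκ, div_lt_iff₀ hκl] at hl2
  obtain ⟨hl2_gap, hl2_b, hl2_xi⟩ := hl2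
  exact Xi2.integral_neg h0 h1 h2 hl2_gap.le (by linarith) (by linarith)
end
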